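/- Let k ≥ 1 be an integer, Q a nonempty string, and P a string with 100k·|Q| ≤ |P| and δ_H(P, Q^∞[0..|P|)) ≤ 2k. Then there exists an integer j ≥ 0 with (j+2)·|Q| ≤ |P| such that P[j·|Q| .. (j+2)·|Q|) = QQ (the concatenation of Q with itself). -/

import Mathlib

/-!
At most `2k` positions of `P` disagree with `Q^∞`. Cut `P` into the aligned windows
`[2i|Q|, (2i+2)|Q|)` for `i < 50k`; since `50k > 2k`, one of them contains no mismatch.
There `P` coincides with `Q^∞`, and an aligned window of length `2|Q|` of `Q^∞` is `QQ`.
-/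

/-- Mismatch positions of two (equal-length) strings:
`Mis(X,Y) = {i : X[i] ≠ Y[i]}`. -/
def mis {α : Type*} [DecidableEq α] [Inhabited α] (X Y : List α) : Finset ℕ :=
  (Finset.range (min X.length Y.length)).filter (fun i => X.getD i default ≠ Y.getD i default)

/-- Hamming distance of two (equal-length) strings: the number of mismatch positions. -/
def hdist {α : Type*} [DecidableEq α] [Inhabited α] (X Y : List α) : ℕ := (mis X Y).card

/-- The fragment `S[x..x+L)`. -/
def frag {α : Type*} (S : List α) (x L : ℕ) : List α := (S.drop x).take L

/-- `Q^∞[a..a+L)`: the string of length `L` whose `i`-th character is `Q[(a+i) mod |Q|]`. -/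
def qinf {α : Type*} [Inhabited α] (Q : List α) (a L : ℕ) : List α :=
  (List.range L).map (fun i => Q.getD ((a + i) % Q.length) default)

/-- A nonempty string is primitive if it is not of the form `Y^h` with `h ≥ 2`. -/
def Primitive {α : Type*} (Q : List α) : Prop :=
  Q ≠ [] ∧ ∀ (Y : List α) (h : ℕ), 2 ≤ h → Q ≠ (List.replicate h Y).flatten

theorem Finset.exists_lt_forall_mul_add_notMem_of_card_lt (M : Finset ℕ) (b N : ℕ)
    (hM : M.card < N) : ∃ i < N, ∀ m < b, i * b + m ∉ M := by
  obtain ⟨i, hiN, hiM⟩ := Finset.exists_mem_notMem_of_card_lt_card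
    (lt_of_le_of_lt Finset.card_image_le (hM.trans_eq (Finset.card_range N).symm) :
      (M.image (· / b)).card < (Finset.range N).card)
  refine ⟨i, Finset.mem_range.mp hiN, fun m hm hmem => hiM (Finset.mem_image.mpr ⟨_, hmem, ?_⟩)⟩
  exact Nat.div_eq_of_lt_le (by omega) (by rw [Nat.succ_mul]; omega)

theorem getD_eq_getD_of_notMem_mis {α : Type*} [DecidableEq α] [Inhabited α] {X Y : List α}
    {p : ℕ} (hX : p < X.length) (hY : p < Y.length) (hp : p ∉ mis X Y) :
    X.getD p default = Y.getD p default := by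
  by_contra hne
  exact hp (Finset.mem_filter.mpr ⟨Finset.mem_range.mpr (lt_min hX hY), hne⟩)

theorem frag_eq_frag_of_notMem_mis {α : Type*} [DecidableEq α] [Inhabited α] {X Y : List α}
    {x L : ℕ} (hX : x + L ≤ X.length) (hY : x + L ≤ Y.length)
    (h : ∀ m < L, x + m ∉ mis X Y) : frag X x L = frag Y x L := by
  apply List.ext_getElem
  · simp only [frag, List.length_take, List.length_drop]
    omega
  · intro m hmX hmY
    simp only [frag, List.length_take, List.length_drop] at hmX
    have hm : m < L := by omega
    have := getD_eq_getD_of_notMem_mis (by omega) (by omega) (h m hm)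
    rw [List.getD_eq_getElem _ _ (by omega), List.getD_eq_getElem _ _ (by omega)] at this
    simpa [frag] using this

theorem length_qinf {α : Type*} [Inhabited α] (Q : List α) (a L : ℕ) :
    (qinf Q a L).length = L := by
  simp [qinf]

theorem frag_qinf {α : Type*} [Inhabited α] (Q : List α) {a x L N : ℕ} (h : x + L ≤ N) :
    frag (qinf Q a N) x L = qinf Q (a + x) L := by
  apply List.ext_getElem
  · simp only [frag, length_qinf, List.length_take, List.length_drop]
    omega
  · intro m _ hm
    simp [frag, qinf, Nat.add_assoc]

theorem qinf_add {α : Type*} [Inhabited α] (Q : List α) (a L₁ L₂ : ℕ) :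
    qinf Q a (L₁ + L₂) = qinf Q a L₁ ++ qinf Q (a + L₁) L₂ := by
  simp [qinf, List.range_add, Function.comp_def, Nat.add_assoc]

theorem qinf_mul_length {α : Type*} [Inhabited α] (Q : List α) (j : ℕ) :
    qinf Q (j * Q.length) Q.length = Q := by
  apply List.ext_getElem
  · exact length_qinf _ _ _
  · intro m _ hm
    simp [qinf, Nat.add_comm (j * Q.length), Nat.mod_eq_of_lt hm, hm]

theorem qinf_mul_length_two_mul {α : Type*} [Inhabited α] (Q : List α) (j : ℕ) :
    qinf Q (j * Q.length) (2 * Q.length) = Q ++ Q := by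
  rw [two_mul, qinf_add, qinf_mul_length, ← Nat.succ_mul, qinf_mul_length]

theorem stmt11_general {α : Type*} [DecidableEq α] [Inhabited α]
    (k : ℕ) (hk : 1 ≤ k) (Q P : List α)
    (hlen : 100 * k * Q.length ≤ P.length)
    (hper : hdist P (qinf Q 0 P.length) ≤ 2 * k) :
    ∃ j : ℕ, (j + 2) * Q.length ≤ P.length ∧
      frag P (j * Q.length) (2 * Q.length) = Q ++ Q := by
  obtain ⟨i, hi, hclean⟩ := Finset.exists_lt_forall_mul_add_notMem_of_card_lt
    (mis P (qinf Q 0 P.length)) (2 * Q.length) (50 * k) (by unfold hdist at hper; omega)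
  have hstart : 2 * i * Q.length = i * (2 * Q.length) := by ring
  have hfit : (2 * i + 2) * Q.length ≤ P.length :=
    le_trans (Nat.mul_le_mul_right _ (by omega)) hlen
  refine ⟨2 * i, hfit, ?_⟩
  have hend : 2 * i * Q.length + 2 * Q.length ≤ P.length := by rw [← add_mul]; exact hfit
  calc frag P (2 * i * Q.length) (2 * Q.length)
      = frag (qinf Q 0 P.length) (2 * i * Q.length) (2 * Q.length) :=
        frag_eq_frag_of_notMem_mis hend (by rwa [length_qinf]) (hstart ▸ hclean)
    _ = qinf Q (2 * i * Q.length) (2 * Q.length) := by rw [frag_qinf Q hend, zero_add]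
    _ = Q ++ Q := qinf_mul_length_two_mul Q (2 * i)

/-- If `100k·|Q| ≤ |P|` and `δ_H(P, Q^∞[0..|P|)) ≤ 2k`, then some aligned window of `P` of
length `2|Q|` equals `QQ`. -/
theorem stmt11 {α : Type*} [DecidableEq α] [Inhabited α]
    (k : ℕ) (hk : 1 ≤ k) (Q P : List α) (hQ : Q ≠ [])
    (hlen : 100 * k * Q.length ≤ P.length)
    (hper : hdist P (qinf Q 0 P.length) ≤ 2 * k) :
    ∃ j : ℕ, (j + 2) * Q.length ≤ P.length ∧
      frag P (j * Q.length) (2 * Q.length) = Q ++ Q :=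
  stmt11_general k hk Q P hlen hper
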